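/- arXiv:1602.02993 — 2 statements merged into one kernel-verified Lean document; each statement's English description precedes it below -/
import Mathlib

section
/- (Converse of Henstock's Lemma) If F is an additive brick function on sub-bricks of I such that for every ε > 0 there is a gauge δ with (𝒟)∑ |f(P)μ(J) − F(J)| ≤ 4ε for every δ-compatible tagged division 𝒟 of I, then f is Henstock–Kurzweil integrable on every sub-brick K ⊆ I with ∫_K f dμ = F(K). -/
open Set Filter

/-- A brick (compact non-degenerate interval) in `ι → ℝ`. -/
structure Brick (ι : Type*) [Fintype ι] where
  lower : ι → ℝ
  upper : ι → ℝ
  lt : ∀ j, lower j < upper j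

variable {ι : Type*} [Fintype ι]

namespace Brick

/-- The underlying closed set of a brick. -/
def toSet (I : Brick ι) : Set (ι → ℝ) := {x | ∀ j, x j ∈ Set.Icc (I.lower j) (I.upper j)}

/-- The open interior of a brick. -/
def inter (I : Brick ι) : Set (ι → ℝ) := {x | ∀ j, x j ∈ Set.Ioo (I.lower j) (I.upper j)}

/-- The volume of a brick. -/
noncomputable def vol (I : Brick ι) : ℝ := ∏ j, (I.upper j - I.lower j)

end Brick

/-- A tagged division of a brick `I`: finitely many non-overlapping sub-bricks covering `I`,
each with a tag point belonging to it. -/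
structure TaggedDiv {ι : Type*} [Fintype ι] (I : Brick ι) where
  pieces : Finset (Brick ι × (ι → ℝ))
  subset_of_mem : ∀ p ∈ pieces, (p.1 : Brick ι).toSet ⊆ I.toSet
  tag_mem : ∀ p ∈ pieces, p.2 ∈ (p.1 : Brick ι).toSet
  nonoverlap : ∀ p ∈ pieces, ∀ q ∈ pieces, p ≠ q →
    (p.1 : Brick ι).inter ∩ (q.1 : Brick ι).inter = ∅
  cover : I.toSet = ⋃ p ∈ pieces, (p.1 : Brick ι).toSet

/-- A gauge on a brick: a function positive at each point of the brick. -/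
def IsGauge (I : Brick ι) (δ : (ι → ℝ) → ℝ) : Prop := ∀ x ∈ I.toSet, 0 < δ x

/-- A tagged division is compatible with the gauge `δ` if each brick lies in the open ball
of radius `δ` about its tag. -/
def Compat {I : Brick ι} (D : TaggedDiv I) (δ : (ι → ℝ) → ℝ) : Prop :=
  ∀ p ∈ D.pieces, (p.1 : Brick ι).toSet ⊆ Metric.ball p.2 (δ p.2)

/-- The Riemann sum of `f` over a tagged division. -/
noncomputable def riemannSum {I : Brick ι} (f : (ι → ℝ) → ℝ) (D : TaggedDiv I) : ℝ :=
  ∑ p ∈ D.pieces, f p.2 * (p.1 : Brick ι).vol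

/-- `f` has Henstock–Kurzweil integral `A` on the brick `I`. -/
def HasHK (I : Brick ι) (f : (ι → ℝ) → ℝ) (A : ℝ) : Prop :=
  ∀ ε > 0, ∃ δ : (ι → ℝ) → ℝ, IsGauge I δ ∧
    ∀ D : TaggedDiv I, Compat D δ → |riemannSum f D - A| < ε

namespace Brick

/-- The `BoxIntegral.Box` with the same endpoints as a brick. -/
def toBox (K : Brick ι) : BoxIntegral.Box ι := ⟨K.lower, K.upper, K.lt⟩

/-- The brick with the same endpoints as a `BoxIntegral.Box`. -/
def _root_.boxToBrick (J : BoxIntegral.Box ι) : Brick ι :=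
  ⟨J.lower, J.upper, J.lower_lt_upper⟩

lemma toSet_eq_Icc (K : Brick ι) : K.toSet = BoxIntegral.Box.Icc K.toBox := by
  ext x
  simp [Brick.toSet, BoxIntegral.Box.Icc_def, Set.mem_Icc, Pi.le_def, toBox, forall_and]

lemma toSet_boxToBrick (J : BoxIntegral.Box ι) :
    (boxToBrick J).toSet = BoxIntegral.Box.Icc J := by
  ext x
  simp [Brick.toSet, BoxIntegral.Box.Icc_def, Set.mem_Icc, Pi.le_def, boxToBrick, forall_and]

lemma isClosed_toSet (K : Brick ι) : IsClosed K.toSet := by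
  rw [toSet_eq_Icc, BoxIntegral.Box.Icc_def]
  exact isClosed_Icc

lemma inter_mono {J K : Brick ι} (h : J.toSet ⊆ K.toSet) : J.inter ⊆ K.inter := by
  have hlmem : J.lower ∈ J.toSet := fun j => ⟨le_refl _, (J.lt j).le⟩
  have humem : J.upper ∈ J.toSet := fun j => ⟨(J.lt j).le, le_refl _⟩
  have hl : ∀ j, K.lower j ≤ J.lower j := fun j => ((h hlmem) j).1
  have hu : ∀ j, J.upper j ≤ K.upper j := fun j => ((h humem) j).2
  intro x hx j
  exact ⟨lt_of_le_of_lt (hl j) (hx j).1, lt_of_lt_of_le (hx j).2 (hu j)⟩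

lemma inter_subset_coe (K : Brick ι) : K.inter ⊆ (↑K.toBox : Set (ι → ℝ)) := by
  intro x hx
  exact fun j => ⟨(hx j).1, (hx j).2.le⟩

lemma _root_.Brick.inter_subset_coe' (J : BoxIntegral.Box ι) :
    (boxToBrick J).inter ⊆ (↑J : Set (ι → ℝ)) := by
  intro x hx
  exact fun j => ⟨(hx j).1, (hx j).2.le⟩

end Brick

/-- **Converse of Henstock's lemma.** If `F` is an additive brick function such that for every
`ε > 0` there is a gauge `δ` with `∑ |f(P)μ(J) − F(J)| ≤ 4ε` over every `δ`-compatible tagged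
division of `I`, then `f` is HK-integrable on every sub-brick `K ⊆ I` with integral `F K`. -/
theorem henstock_lemma_converse (I : Brick ι) (f : (ι → ℝ) → ℝ) (F : Brick ι → ℝ)
    (hadd : ∀ K : Brick ι, K.toSet ⊆ I.toSet →
      ∀ D : TaggedDiv K, (∑ p ∈ D.pieces, F p.1) = F K)
    (hsmall : ∀ ε > (0 : ℝ), ∃ δ : (ι → ℝ) → ℝ, IsGauge I δ ∧
      ∀ D : TaggedDiv I, Compat D δ →
        ∑ p ∈ D.pieces, |f p.2 * (p.1 : Brick ι).vol - F p.1| ≤ 4 * ε) :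
    ∀ K : Brick ι, K.toSet ⊆ I.toSet → HasHK K f (F K) := by
  classical
  intro K hK ε hε
  obtain ⟨δ, hδg, hδ⟩ := hsmall (ε / 8) (by positivity)
  refine ⟨δ, fun x hx => hδg x (hK hx), fun D hD => ?_⟩
  set Ib := I.toBox with hIb
  set Kb := K.toBox with hKb
  have hIcc : I.toSet = BoxIntegral.Box.Icc Ib := Brick.toSet_eq_Icc I
  have hKIcc : K.toSet = BoxIntegral.Box.Icc Kb := Brick.toSet_eq_Icc K
  have hle : Kb ≤ Ib := BoxIntegral.Box.le_iff_Icc.2 (by rw [← hIcc, ← hKIcc]; exact hK)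
  -- the gauge as a positive-valued function
  set r : (ι → ℝ) → Set.Ioi (0 : ℝ) := fun x =>
    if h : 0 < δ x then ⟨δ x / 2, by simpa using half_pos h⟩ else ⟨1, by simp⟩ with hr
  -- prepartition of I \ K
  set πc := (BoxIntegral.Prepartition.single Ib Kb hle).compl with hπc
  have hπcU : πc.iUnion = ↑Ib \ ↑Kb := by
    rw [hπc, BoxIntegral.Prepartition.iUnion_compl, BoxIntegral.Prepartition.iUnion_single]
  -- Cousin: fine tagged partitions of each box
  have key := fun J : BoxIntegral.Box ι =>
    J.exists_taggedPartition_isHenstock_isSubordinate_homothetic r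
  choose πi hπiP hπiH hπiS _ _ using key
  set πT := πc.biUnionTagged πi with hπT
  have hTU : πT.iUnion = ↑Ib \ ↑Kb := by
    rw [hπT, BoxIntegral.Prepartition.iUnion_biUnionTagged, ← hπcU,
      BoxIntegral.Prepartition.iUnion_def]
    exact Set.iUnion₂_congr fun J hJ => (hπiP J).iUnion_eq
  have hTH : πT.IsHenstock := BoxIntegral.TaggedPrepartition.isHenstock_biUnionTagged.2
    fun J _ => hπiH J
  have hTS : πT.IsSubordinate r := BoxIntegral.TaggedPrepartition.isSubordinate_biUnionTagged.2
    fun J _ => hπiS J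
  -- extra pieces from the complement
  set P2 : Finset (Brick ι × (ι → ℝ)) :=
    πT.boxes.image (fun J => (boxToBrick J, πT.tag J)) with hP2
  have hP2mem : ∀ p ∈ P2, ∃ J ∈ πT, p = (boxToBrick J, πT.tag J) := by
    intro p hp
    obtain ⟨J, hJ, hJp⟩ := Finset.mem_image.1 hp
    exact ⟨J, hJ, hJp.symm⟩
  have hIbIcc : ∀ J : BoxIntegral.Box ι, J ∈ πT → BoxIntegral.Box.Icc J ⊆ I.toSet := by
    intro J hJ
    rw [hIcc]
    exact BoxIntegral.Box.le_iff_Icc.1 (πT.le_of_mem' J hJ)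
  -- interiors of pieces of D lie inside the open box of K
  have hDint : ∀ p ∈ D.pieces, (p.1 : Brick ι).inter ⊆ (↑Kb : Set (ι → ℝ)) := by
    intro p hp
    exact (Brick.inter_mono (D.subset_of_mem p hp)).trans (Brick.inter_subset_coe K)
  have hP2int : ∀ p ∈ P2, (p.1 : Brick ι).inter ⊆ (↑Ib : Set (ι → ℝ)) \ ↑Kb := by
    intro p hp
    obtain ⟨J, hJ, rfl⟩ := hP2mem p hp
    refine (Brick.inter_subset_coe' J).trans ?_
    rw [← hTU]
    exact πT.subset_iUnion hJ
  -- the extended tagged division of I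
  set D2 : TaggedDiv I :=
    { pieces := D.pieces ∪ P2
      subset_of_mem := by
        intro p hp
        rcases Finset.mem_union.1 hp with h | h
        · exact (D.subset_of_mem p h).trans hK
        · obtain ⟨J, hJ, rfl⟩ := hP2mem p h
          rw [Brick.toSet_boxToBrick]
          exact hIbIcc J hJ
      tag_mem := by
        intro p hp
        rcases Finset.mem_union.1 hp with h | h
        · exact D.tag_mem p h
        · obtain ⟨J, hJ, rfl⟩ := hP2mem p h
          rw [Brick.toSet_boxToBrick]
          exact hTH J hJ
      nonoverlap := by
        intro p hp q hq hne
        rcases Finset.mem_union.1 hp with h | h <;> rcases Finset.mem_union.1 hq with h' | h'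
        · exact D.nonoverlap p h q h' hne
        · refine Set.eq_empty_of_subset_empty ?_
          refine (Set.inter_subset_inter (hDint p h) (hP2int q h')).trans ?_
          intro x hx
          exact hx.2.2 hx.1
        · refine Set.eq_empty_of_subset_empty ?_
          refine (Set.inter_subset_inter (hP2int p h) (hDint q h')).trans ?_
          intro x hx
          exact hx.1.2 hx.2
        · obtain ⟨J₁, hJ₁, rfl⟩ := hP2mem p h
          obtain ⟨J₂, hJ₂, rfl⟩ := hP2mem q h'
          have hJne : J₁ ≠ J₂ := by
            rintro rfl; exact hne rfl
          have hdisj : Disjoint (↑J₁ : Set (ι → ℝ)) ↑J₂ :=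
            πT.disjoint_coe_of_mem hJ₁ hJ₂ hJne
          refine Set.eq_empty_of_subset_empty ?_
          refine (Set.inter_subset_inter (Brick.inter_subset_coe' J₁)
            (Brick.inter_subset_coe' J₂)).trans ?_
          rw [Set.disjoint_iff_inter_eq_empty.1 hdisj]
      cover := by
        apply Set.Subset.antisymm
        · -- I ⊆ union of pieces
          have hclosed : IsClosed (⋃ p ∈ D.pieces ∪ P2, (p.1 : Brick ι).toSet) := by
            refine Set.Finite.isClosed_biUnion (Finset.finite_toSet _) ?_
            intro p _
            exact Brick.isClosed_toSet p.1
          have hsub : (↑Ib : Set (ι → ℝ)) ⊆ ⋃ p ∈ D.pieces ∪ P2, (p.1 : Brick ι).toSet := by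
            intro x hx
            by_cases hxK : x ∈ (↑Kb : Set (ι → ℝ))
            · have hx' : x ∈ K.toSet := by
                rw [hKIcc]; exact BoxIntegral.Box.coe_subset_Icc hxK
              rw [D.cover] at hx'
              obtain ⟨s, ⟨p, rfl⟩, hs⟩ := hx'
              obtain ⟨s', ⟨hp, rfl⟩, hx''⟩ := hs
              exact Set.mem_biUnion (Finset.mem_union_left _ hp) hx''
            · have : x ∈ πT.iUnion := by rw [hTU]; exact ⟨hx, hxK⟩
              obtain ⟨J, hJ, hxJ⟩ := πT.mem_iUnion.1 this
              refine Set.mem_biUnion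
                (Finset.mem_union_right _ (Finset.mem_image_of_mem _ hJ)) ?_
              rw [Brick.toSet_boxToBrick]
              exact BoxIntegral.Box.coe_subset_Icc hxJ
          have hclsub := closure_minimal hsub hclosed
          have hcl : closure (↑Ib : Set (ι → ℝ)) = BoxIntegral.Box.Icc Ib := by
            simp [BoxIntegral.Box.coe_eq_pi, closure_pi_set,
              BoxIntegral.Box.Icc_eq_pi, BoxIntegral.Box.lower_ne_upper]
          rw [hIcc, ← hcl]
          exact hclsub
        · refine Set.iUnion₂_subset fun p hp => ?_
          rcases Finset.mem_union.1 hp with h | h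
          · exact (D.subset_of_mem p h).trans hK
          · obtain ⟨J, hJ, rfl⟩ := hP2mem p h
            rw [Brick.toSet_boxToBrick]
            exact hIbIcc J hJ } with hD2
  have hcompat : Compat D2 δ := by
    intro p hp
    rcases Finset.mem_union.1 hp with h | h
    · exact hD p h
    · obtain ⟨J, hJ, rfl⟩ := hP2mem p h
      have htag : πT.tag J ∈ I.toSet := hIbIcc J hJ (hTH J hJ)
      have hpos : 0 < δ (πT.tag J) := hδg _ htag
      have hrtag : (r (πT.tag J) : ℝ) = δ (πT.tag J) / 2 := by
        rw [hr]; simp [hpos]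
      have hIccJ := hTS J hJ
      rw [hrtag] at hIccJ
      rw [Brick.toSet_boxToBrick]
      exact hIccJ.trans (Metric.closedBall_subset_ball (half_lt_self hpos))
  have hbound := hδ D2 hcompat
  have hsumF : (∑ p ∈ D.pieces, F p.1) = F K := hadd K hK D
  have h1 : riemannSum f D - F K = ∑ p ∈ D.pieces, (f p.2 * (p.1 : Brick ι).vol - F p.1) := by
    rw [Finset.sum_sub_distrib, riemannSum, hsumF]
  have h2 : |riemannSum f D - F K| ≤
      ∑ p ∈ D.pieces, |f p.2 * (p.1 : Brick ι).vol - F p.1| := by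
    rw [h1]; exact Finset.abs_sum_le_sum_abs _ _
  have h3 : (∑ p ∈ D.pieces, |f p.2 * (p.1 : Brick ι).vol - F p.1|) ≤
      ∑ p ∈ D2.pieces, |f p.2 * (p.1 : Brick ι).vol - F p.1| := by
    refine Finset.sum_le_sum_of_subset_of_nonneg ?_ fun p _ _ => abs_nonneg _
    exact Finset.subset_union_left
  have : |riemannSum f D - F K| ≤ 4 * (ε / 8) := (h2.trans h3).trans hbound
  linarith
end

section
/- (Levi monotone convergence for gauge integrals) Let (fᵣ) be a sequence of real functions, each Henstock–Kurzweil integrable on a brick I, such that for each point P the sequence (fᵣ(P)) is monotone increasing and converges to f(P). If the integrals Fᵣ = ∫_I fᵣ dμ have a finite supremum F, then f is Henstock–Kurzweil integrable on I with ∫_I f dμ = F. -/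
open Set Filter

variable {ι : Type*} [Fintype ι]

/-!
Fix `N` with `F_N` close to `F` and choose for every point `P` an index `r P ≥ N` with
`f P - f_{r P} P` small. Once the gauge at `P` is fine for `f_N` and for the increments
`f_{s+1} - f_s`, `s < r P`, a fine Riemann sum of `f` lies between that of `f_N` and that of
`P ↦ f_{r P} P` plus a small error. The gap between the last two telescopes into sums of the
nonnegative increments over partial divisions. Completing a partial division by Cousin's lemma
only adds nonnegative terms, so each such sum is at most `F_{s+1} - F_s` plus a tolerance, and
the gap is at most `F - F_N` plus a geometric series of tolerances.
-/

open Metric MeasureTheory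

namespace Brick

variable (J : Brick ι)

lemma toSet_eq_pi : J.toSet = Set.univ.pi fun j => Icc (J.lower j) (J.upper j) := by
  ext x; simp [toSet, Pi.le_def, forall_and]

lemma inter_eq_pi : J.inter = Set.univ.pi fun j => Ioo (J.lower j) (J.upper j) := by
  ext x; simp [inter, Set.mem_pi]

lemma vol_pos : 0 < J.vol :=
  Finset.prod_pos fun j _ => sub_pos.2 (J.lt j)

lemma vol_nonneg : 0 ≤ J.vol := J.vol_pos.le

lemma lower_mem_toSet : J.lower ∈ J.toSet := fun j => ⟨le_rfl, (J.lt j).le⟩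

lemma inter_subset_toSet : J.inter ⊆ J.toSet := fun _ hx j => Ioo_subset_Icc_self (hx j)

lemma inter_nonempty : J.inter.Nonempty :=
  ⟨fun j => (J.lower j + J.upper j) / 2,
    fun j => ⟨by linarith [J.lt j], by linarith [J.lt j]⟩⟩

lemma isCompact_toSet : IsCompact J.toSet := by
  rw [toSet_eq_pi]
  exact isCompact_univ_pi fun j => isCompact_Icc

lemma isClosed_toSet_s8 : IsClosed J.toSet := by
  rw [toSet_eq_pi]
  exact isClosed_set_pi fun j _ => isClosed_Icc

lemma interior_toSet : interior J.toSet = J.inter := by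
  rw [toSet_eq_pi, inter_eq_pi, interior_pi_set Set.finite_univ]
  simp [interior_Icc]

lemma inter_subset_inter {K L : Brick ι} (h : K.toSet ⊆ L.toSet) : K.inter ⊆ L.inter := by
  simpa only [interior_toSet] using interior_mono h

lemma measurableSet_inter : MeasurableSet J.inter := by
  rw [inter_eq_pi]
  exact MeasurableSet.univ_pi fun j => measurableSet_Ioo

lemma volume_toSet : volume J.toSet = ENNReal.ofReal J.vol := by
  rw [toSet_eq_pi, volume_pi_pi]
  simp only [Real.volume_Icc]
  rw [vol, ← ENNReal.ofReal_prod_of_nonneg fun j _ => sub_nonneg.2 (J.lt j).le]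

lemma volume_inter : volume J.inter = ENNReal.ofReal J.vol := by
  rw [inter_eq_pi, volume_pi_pi]
  simp only [Real.volume_Ioo]
  rw [vol, ← ENNReal.ofReal_prod_of_nonneg fun j _ => sub_nonneg.2 (J.lt j).le]

lemma toSet_subset_ball {x : ι → ℝ} {r : ℝ} (hx : x ∈ J.toSet) (hr₀ : 0 < r)
    (hr : ∀ j, J.upper j - J.lower j < r) : J.toSet ⊆ ball x r := by
  intro y hy
  rw [mem_ball, dist_pi_lt_iff hr₀]
  intro j
  rw [Real.dist_eq, abs_sub_lt_iff]
  constructor <;> linarith [(hx j).1, (hx j).2, (hy j).1, (hy j).2, hr j]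

noncomputable def child (σ : ι → Bool) : Brick ι where
  lower j := if σ j then (J.lower j + J.upper j) / 2 else J.lower j
  upper j := if σ j then J.upper j else (J.lower j + J.upper j) / 2
  lt j := by cases σ j <;> simp <;> linarith [J.lt j]

lemma child_width (σ : ι → Bool) (j : ι) :
    (J.child σ).upper j - (J.child σ).lower j = (J.upper j - J.lower j) / 2 := by
  cases h : σ j <;> simp [child, h] <;> ring

lemma child_toSet_subset (σ : ι → Bool) : (J.child σ).toSet ⊆ J.toSet := by
  intro x hx j
  have := hx j
  cases h : σ j <;>
    simp only [child, h, Set.mem_Icc, if_true, if_false, Bool.false_eq_true] at this ⊢ <;>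
    constructor <;> linarith [J.lt j, this.1, this.2]

lemma child_inter_inter_eq_empty {σ σ' : ι → Bool} (h : σ ≠ σ') :
    (J.child σ).inter ∩ (J.child σ').inter = ∅ := by
  obtain ⟨j, hj⟩ := Function.ne_iff.1 h
  refine eq_empty_of_forall_notMem fun x ⟨hx, hx'⟩ => ?_
  have h1 := hx j
  have h2 := hx' j
  cases hσ : σ j <;> cases hσ' : σ' j <;>
    simp only [hσ, hσ', ne_eq, not_true_eq_false] at hj <;>
    simp only [child, hσ, hσ', if_true, if_false, Bool.false_eq_true, Set.mem_Ioo] at h1 h2 <;>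
    linarith [h1.1, h1.2, h2.1, h2.2]

lemma toSet_eq_iUnion_child : J.toSet = ⋃ σ, (J.child σ).toSet := by
  classical
  refine Subset.antisymm (fun x hx => ?_) (iUnion_subset J.child_toSet_subset)
  refine mem_iUnion.2 ⟨fun j => decide ((J.lower j + J.upper j) / 2 ≤ x j), fun j => ?_⟩
  by_cases hm : (J.lower j + J.upper j) / 2 ≤ x j
  · simp [child, hm, (hx j).2]
  · simp [child, hm, (hx j).1, (not_le.1 hm).le]

end Brick

namespace TaggedDiv

variable {I : Brick ι}

def singleton (K : Brick ι) (x : ι → ℝ) (hx : x ∈ K.toSet) : TaggedDiv K where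
  pieces := {(K, x)}
  subset_of_mem := by simp
  tag_mem := by simpa using hx
  nonoverlap := by simp
  cover := by simp

lemma inter_subset (D : TaggedDiv I) {p : Brick ι × (ι → ℝ)} (hp : p ∈ D.pieces) :
    p.1.inter ⊆ I.inter :=
  Brick.inter_subset_inter (D.subset_of_mem p hp)

lemma sum_vol_le (D : TaggedDiv I) : ∑ p ∈ D.pieces, p.1.vol ≤ I.vol := by
  have hdisj : (D.pieces : Set (Brick ι × (ι → ℝ))).PairwiseDisjoint fun p => p.1.inter :=
    fun p hp q hq hpq => disjoint_iff_inter_eq_empty.2 (D.nonoverlap p hp q hq hpq)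
  have hvol : ∑ p ∈ D.pieces, volume p.1.inter ≤ volume I.toSet := by
    rw [← measure_biUnion_finset hdisj fun p _ => p.1.measurableSet_inter]
    exact measure_mono (iUnion₂_subset fun p hp =>
      (D.inter_subset hp).trans I.inter_subset_toSet)
  rw [Brick.volume_toSet, Finset.sum_congr rfl fun p _ => p.1.volume_inter,
    ← ENNReal.ofReal_sum_of_nonneg fun p _ => p.1.vol_nonneg] at hvol
  exact (ENNReal.ofReal_le_ofReal_iff I.vol_nonneg).1 hvol

section glue

variable {α : Type*} (T : Finset α) (B : α → Brick ι)
  (hsub : ∀ a ∈ T, (B a).toSet ⊆ I.toSet)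
  (hnov : ∀ a ∈ T, ∀ b ∈ T, a ≠ b → (B a).inter ∩ (B b).inter = ∅)
  (hcov : I.toSet = ⋃ a ∈ T, (B a).toSet) (E : ∀ a, TaggedDiv (B a))

open Classical in
noncomputable def glue : TaggedDiv I where
  pieces := T.biUnion fun a => (E a).pieces
  subset_of_mem q hq := by
    obtain ⟨a, ha, hq⟩ := Finset.mem_biUnion.1 hq
    exact ((E a).subset_of_mem q hq).trans (hsub a ha)
  tag_mem q hq := by
    obtain ⟨a, -, hq⟩ := Finset.mem_biUnion.1 hq
    exact (E a).tag_mem q hq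
  nonoverlap q hq q' hq' hne := by
    obtain ⟨a, ha, hq⟩ := Finset.mem_biUnion.1 hq
    obtain ⟨b, hb, hq'⟩ := Finset.mem_biUnion.1 hq'
    by_cases hab : a = b
    · subst hab
      exact (E a).nonoverlap q hq q' hq' hne
    · exact subset_empty_iff.1 <| hnov a ha b hb hab ▸
        inter_subset_inter ((E a).inter_subset hq) ((E b).inter_subset hq')
  cover := by
    rw [hcov, Finset.set_biUnion_biUnion]
    exact iUnion₂_congr fun a _ => (E a).cover

lemma mem_glue_pieces {q : Brick ι × (ι → ℝ)} :
    q ∈ (glue T B hsub hnov hcov E).pieces ↔ ∃ a ∈ T, q ∈ (E a).pieces := by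
  classical
  simp [glue]

lemma riemannSum_glue (g : (ι → ℝ) → ℝ) :
    riemannSum g (glue T B hsub hnov hcov E) = ∑ a ∈ T, riemannSum g (E a) := by
  classical
  have hdisj : (T : Set α).PairwiseDisjoint fun a => (E a).pieces := by
    intro a ha b hb hab
    refine Finset.disjoint_left.2 fun q hqa hqb => ?_
    obtain ⟨x, hx⟩ := q.1.inter_nonempty
    have hx' := mem_inter ((E a).inter_subset hqa hx) ((E b).inter_subset hqb hx)
    rwa [hnov a ha b hb hab] at hx'
  exact Finset.sum_biUnion hdisj

end glue

end TaggedDiv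

section

variable {I : Brick ι} {D : TaggedDiv I}

lemma Compat.mono {δ δ' : (ι → ℝ) → ℝ} (hD : Compat D δ)
    (h : ∀ p ∈ D.pieces, δ p.2 ≤ δ' p.2) : Compat D δ' :=
  fun p hp => (hD p hp).trans (ball_subset_ball (h p hp))

lemma compat_singleton {K : Brick ι} {x : ι → ℝ} (hx : x ∈ K.toSet)
    {δ : (ι → ℝ) → ℝ} (h : K.toSet ⊆ ball x (δ x)) :
    Compat (TaggedDiv.singleton K x hx) δ := by
  simpa [Compat, TaggedDiv.singleton] using h

lemma compat_glue {α : Type*} {T : Finset α} {B : α → Brick ι} {hsub hnov hcov}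
    {E : ∀ a, TaggedDiv (B a)} {δ : (ι → ℝ) → ℝ} (hE : ∀ a ∈ T, Compat (E a) δ) :
    Compat (TaggedDiv.glue (I := I) T B hsub hnov hcov E) δ := fun q hq => by
  obtain ⟨a, ha, hq⟩ := (TaggedDiv.mem_glue_pieces T B hsub hnov hcov E).1 hq
  exact hE a ha q hq

lemma riemannSum_singleton (g : (ι → ℝ) → ℝ) {K : Brick ι} {x : ι → ℝ}
    (hx : x ∈ K.toSet) :
    riemannSum g (TaggedDiv.singleton K x hx) = g x * K.vol := by
  simp [riemannSum, TaggedDiv.singleton]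

lemma riemannSum_sub (f g : (ι → ℝ) → ℝ) :
    riemannSum (fun x => f x - g x) D = riemannSum f D - riemannSum g D := by
  simp only [riemannSum, sub_mul, Finset.sum_sub_distrib]

lemma riemannSum_mono {f g : (ι → ℝ) → ℝ} (h : ∀ x, f x ≤ g x) :
    riemannSum f D ≤ riemannSum g D :=
  Finset.sum_le_sum fun p _ => mul_le_mul_of_nonneg_right (h p.2) p.1.vol_nonneg

lemma riemannSum_nonneg {g : (ι → ℝ) → ℝ} (hg : ∀ x, 0 ≤ g x) : 0 ≤ riemannSum g D :=
  Finset.sum_nonneg fun p _ => mul_nonneg (hg p.2) p.1.vol_nonneg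

lemma riemannSum_le_add_mul_vol {f g : (ι → ℝ) → ℝ} {c : ℝ} (hc : 0 ≤ c)
    (h : ∀ x, f x ≤ g x + c) : riemannSum f D ≤ riemannSum g D + c * I.vol :=
  calc riemannSum f D ≤ riemannSum (fun x => g x + c) D := riemannSum_mono h
    _ = riemannSum g D + c * ∑ p ∈ D.pieces, p.1.vol := by
      simp only [riemannSum, add_mul, Finset.sum_add_distrib, Finset.mul_sum]
    _ ≤ riemannSum g D + c * I.vol := by gcongr; exact D.sum_vol_le

end

lemma HasHK.sub {I : Brick ι} {f g : (ι → ℝ) → ℝ} {A B : ℝ} (hf : HasHK I f A)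
    (hg : HasHK I g B) : HasHK I (fun x => f x - g x) (A - B) := by
  intro ε hε
  obtain ⟨δ, hδ, hfδ⟩ := hf (ε / 2) (by linarith)
  obtain ⟨δ', hδ', hgδ'⟩ := hg (ε / 2) (by linarith)
  refine ⟨fun x => min (δ x) (δ' x), fun x hx => lt_min (hδ x hx) (hδ' x hx),
    fun D hD => ?_⟩
  have h := hfδ D (hD.mono fun p _ => min_le_left _ _)
  have h' := hgδ' D (hD.mono fun p _ => min_le_right _ _)
  rw [riemannSum_sub]
  calc |riemannSum f D - riemannSum g D - (A - B)|
      ≤ |riemannSum f D - A| + |riemannSum g D - B| := by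
        rw [sub_sub_sub_comm]; exact abs_sub _ _
    _ < ε := by linarith

lemma exists_taggedDiv_compat_of_forall_child {J : Brick ι} {γ : (ι → ℝ) → ℝ}
    (h : ∀ σ, ∃ D : TaggedDiv (J.child σ), Compat D γ) :
    ∃ D : TaggedDiv J, Compat D γ := by
  classical
  choose E hE using h
  exact ⟨TaggedDiv.glue Finset.univ J.child (fun σ _ => J.child_toSet_subset σ)
    (fun σ _ σ' _ => J.child_inter_inter_eq_empty) (by simpa using J.toSet_eq_iUnion_child) E,
    compat_glue fun σ _ => hE σ⟩

lemma Brick.exists_mem_forall_subset_ball_of_child {K : ℕ → Brick ι} {σ : ℕ → ι → Bool}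
    (hK : ∀ n, K (n + 1) = (K n).child (σ n)) :
    ∃ x ∈ (K 0).toSet, ∀ r > 0, ∃ n, x ∈ (K n).toSet ∧ (K n).toSet ⊆ ball x r := by
  have hsub (n : ℕ) : (K (n + 1)).toSet ⊆ (K n).toSet := hK n ▸ (K n).child_toSet_subset _
  have hwidth : ∀ n j,
      (K n).upper j - (K n).lower j = ((K 0).upper j - (K 0).lower j) * (1 / 2) ^ n := by
    intro n j
    induction n with
    | zero => simp
    | succ n ih => rw [hK, Brick.child_width, ih, pow_succ]; ring
  obtain ⟨x, hx⟩ :=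
    (K 0).isCompact_toSet.nonempty_iInter_of_sequence_nonempty_isCompact_isClosed _ hsub
      (fun n => ⟨_, (K n).lower_mem_toSet⟩) fun n => (K n).isClosed_toSet_s8
  rw [mem_iInter] at hx
  refine ⟨x, hx 0, fun r hr => ?_⟩
  have hsmall : ∀ᶠ n in atTop, ∀ j, (K n).upper j - (K n).lower j < r := by
    refine eventually_all.2 fun j => ?_
    have := (tendsto_pow_atTop_nhds_zero_of_lt_one (r := (1 / 2 : ℝ)) (by norm_num)
      (by norm_num)).const_mul ((K 0).upper j - (K 0).lower j)
    rw [mul_zero] at this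
    exact (this.eventually (gt_mem_nhds hr)).mono fun n hn => hwidth n j ▸ hn
  obtain ⟨n, hn⟩ := hsmall.exists
  exact ⟨n, hx n, (K n).toSet_subset_ball (hx n) hr hn⟩

/-- **Cousin's lemma**. -/
theorem exists_taggedDiv_compat (J : Brick ι) {γ : (ι → ℝ) → ℝ} (hγ : IsGauge J γ) :
    ∃ D : TaggedDiv J, Compat D γ := by
  by_contra hJ
  have step (L : Brick ι) (hL : ¬ ∃ D : TaggedDiv L, Compat D γ) :
      ∃ σ, ¬ ∃ D : TaggedDiv (L.child σ), Compat D γ := by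
    by_contra! h
    exact hL (exists_taggedDiv_compat_of_forall_child h)
  choose next hnext using step
  let K : ℕ → {L : Brick ι // ¬ ∃ D : TaggedDiv L, Compat D γ} := fun n =>
    Nat.rec ⟨J, hJ⟩ (fun _ L => ⟨L.1.child (next L.1 L.2), hnext L.1 L.2⟩) n
  obtain ⟨x, hxJ, hx⟩ := Brick.exists_mem_forall_subset_ball_of_child (K := fun n => (K n).1)
    (σ := fun n => next (K n).1 (K n).2) fun n => rfl
  obtain ⟨n, hxn, hball⟩ := hx (γ x) (hγ x hxJ)
  exact (K n).2 ⟨_, compat_singleton hxn hball⟩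

/-- A one-sided Saks–Henstock lemma. -/
lemma sum_le_of_compat_of_nonneg {I : Brick ι} {g : (ι → ℝ) → ℝ} (hg : ∀ x, 0 ≤ g x)
    {G ε : ℝ} {γ : (ι → ℝ) → ℝ} (hγ : IsGauge I γ)
    (hG : ∀ D : TaggedDiv I, Compat D γ → riemannSum g D < G + ε)
    (D : TaggedDiv I) {S : Finset (Brick ι × (ι → ℝ))} (hS : S ⊆ D.pieces)
    (hfine : ∀ p ∈ S, p.1.toSet ⊆ ball p.2 (γ p.2)) :
    ∑ p ∈ S, g p.2 * p.1.vol < G + ε := by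
  classical
  have hE (p : Brick ι × (ι → ℝ)) : ∃ E : TaggedDiv p.1,
      (p ∈ D.pieces → Compat E γ) ∧ (p ∈ S → riemannSum g E = g p.2 * p.1.vol) := by
    by_cases hpS : p ∈ S
    · have hp := D.tag_mem p (hS hpS)
      exact ⟨_, fun _ => compat_singleton hp (hfine p hpS), fun _ => riemannSum_singleton g hp⟩
    by_cases hpD : p ∈ D.pieces
    · obtain ⟨E, hE⟩ :=
        exists_taggedDiv_compat p.1 fun x hx => hγ x (D.subset_of_mem p hpD hx)
      exact ⟨E, fun _ => hE, fun h => absurd h hpS⟩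
    · exact ⟨TaggedDiv.singleton _ _ p.1.lower_mem_toSet, fun h => absurd h hpD,
        fun h => absurd h hpS⟩
  choose E hEγ hEg using hE
  let D' := TaggedDiv.glue D.pieces Prod.fst D.subset_of_mem D.nonoverlap D.cover E
  calc ∑ p ∈ S, g p.2 * p.1.vol = ∑ p ∈ S, riemannSum g (E p) :=
        Finset.sum_congr rfl fun p hp => (hEg p hp).symm
    _ ≤ ∑ p ∈ D.pieces, riemannSum g (E p) :=
        Finset.sum_le_sum_of_subset_of_nonneg hS fun p _ _ => riemannSum_nonneg hg
    _ = riemannSum g D' := (TaggedDiv.riemannSum_glue ..).symm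
    _ < G + ε := hG D' (compat_glue hEγ)

lemma Finset.sum_sub_eq_sum_Ico_sum_filter {α : Type*} (t : Finset α) (a : ℕ → α → ℝ)
    (r : α → ℕ) {N M : ℕ} (hN : ∀ p ∈ t, N ≤ r p) (hM : ∀ p ∈ t, r p ≤ M) :
    ∑ p ∈ t, (a (r p) p - a N p) =
      ∑ s ∈ Finset.Ico N M, ∑ p ∈ t with s < r p, (a (s + 1) p - a s p) := by
  calc ∑ p ∈ t, (a (r p) p - a N p)
      = ∑ p ∈ t, ∑ s ∈ Finset.Ico N (r p), (a (s + 1) p - a s p) :=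
        Finset.sum_congr rfl fun p hp => (Finset.sum_Ico_sub (fun s => a s p) (hN p hp)).symm
    _ = _ := Finset.sum_comm' fun p s => by
        simp only [Finset.mem_Ico, Finset.mem_filter]
        constructor
        · rintro ⟨hp, hNs, hs⟩; exact ⟨⟨hp, hs⟩, hNs, hs.trans_le (hM p hp)⟩
        · rintro ⟨⟨hp, hs⟩, hNs, -⟩; exact ⟨hp, hNs, hs⟩

lemma exists_riemannSum_sub_le_of_increments {I : Brick ι} {fr : ℕ → (ι → ℝ) → ℝ}
    {Fr : ℕ → ℝ} (hmono : ∀ P, Monotone fun r => fr r P) {γ : ℕ → (ι → ℝ) → ℝ}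
    {η : ℕ → ℝ} (hγ : ∀ s, IsGauge I (γ s))
    (hint : ∀ s, ∀ D : TaggedDiv I, Compat D (γ s) →
      |riemannSum (fun x => fr (s + 1) x - fr s x) D - (Fr (s + 1) - Fr s)| < η s)
    (D : TaggedDiv I) {r : (ι → ℝ) → ℕ} {N : ℕ} (hN : ∀ x, N ≤ r x)
    {δ : (ι → ℝ) → ℝ} (hD : Compat D δ) (hδ : ∀ x, ∀ s < r x, δ x ≤ γ s x) :
    ∃ M, riemannSum (fun x => fr (r x) x) D - riemannSum (fr N) D ≤
      Fr M - Fr N + ∑ s ∈ Finset.Ico N M, η s := by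
  let M := max N (D.pieces.sup fun p => r p.2)
  have hM (p) (hp : p ∈ D.pieces) : r p.2 ≤ M :=
    le_max_of_le_right (Finset.le_sup (f := fun p => r p.2) hp)
  have hpartial : ∀ s ∈ Finset.Ico N M,
      ∑ p ∈ D.pieces with s < r p.2, (fr (s + 1) p.2 * p.1.vol - fr s p.2 * p.1.vol) ≤
        Fr (s + 1) - Fr s + η s := by
    intro s _
    simp only [← sub_mul]
    refine (sum_le_of_compat_of_nonneg (fun x => sub_nonneg.2 (hmono x s.le_succ)) (hγ s)
      (fun D hD => by linarith [(abs_sub_lt_iff.1 (hint s D hD)).1]) D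
      (Finset.filter_subset _ _) fun p hp => ?_).le
    obtain ⟨hp, hs⟩ := Finset.mem_filter.1 hp
    exact (hD p hp).trans (ball_subset_ball (hδ p.2 s hs))
  refine ⟨M, ?_⟩
  calc riemannSum (fun x => fr (r x) x) D - riemannSum (fr N) D
      = ∑ s ∈ Finset.Ico N M, ∑ p ∈ D.pieces with s < r p.2,
          (fr (s + 1) p.2 * p.1.vol - fr s p.2 * p.1.vol) := by
        rw [riemannSum, riemannSum, ← Finset.sum_sub_distrib]
        exact Finset.sum_sub_eq_sum_Ico_sum_filter D.pieces (fun s p => fr s p.2 * p.1.vol)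
          (fun p => r p.2) (fun p _ => hN p.2) hM
    _ ≤ ∑ s ∈ Finset.Ico N M, (Fr (s + 1) - Fr s + η s) := Finset.sum_le_sum hpartial
    _ = Fr M - Fr N + ∑ s ∈ Finset.Ico N M, η s := by
        rw [Finset.sum_add_distrib, Finset.sum_Ico_sub Fr (le_max_left _ _)]

lemma exists_isGauge_le {I : Brick ι} {γ : ℕ → (ι → ℝ) → ℝ}
    (hγ : ∀ s, IsGauge I (γ s)) (r : (ι → ℝ) → ℕ) :
    ∃ δ, IsGauge I δ ∧ ∀ x, ∀ s ≤ r x, δ x ≤ γ s x :=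
  ⟨fun x => (Finset.range (r x + 1)).inf' Finset.nonempty_range_add_one (γ · x),
    fun x hx => (Finset.lt_inf'_iff _).2 fun s _ => hγ s x hx,
    fun _ _ hs => Finset.inf'_le _ (Finset.mem_range.2 (Nat.lt_succ_of_le hs))⟩

lemma sum_Ico_geometric_two_le (N M : ℕ) : ∑ s ∈ Finset.Ico N M, (1 / 2 : ℝ) ^ s ≤ 2 :=
  (Finset.sum_le_sum_of_subset_of_nonneg (fun _ hs => Finset.mem_range.2 (Finset.mem_Ico.1 hs).2)
    fun _ _ _ => by positivity).trans (sum_geometric_two_le M)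

/-- **Levi's monotone convergence theorem for gauge integrals.** -/
theorem levi_monotone_convergence (I : Brick ι) (f : (ι → ℝ) → ℝ)
    (fr : ℕ → (ι → ℝ) → ℝ) (Fr : ℕ → ℝ)
    (hint : ∀ r, HasHK I (fr r) (Fr r))
    (hmono : ∀ P, Monotone fun r => fr r P)
    (hlim : ∀ P, Filter.Tendsto (fun r => fr r P) Filter.atTop (nhds (f P)))
    (F : ℝ) (hsup : IsLUB (Set.range Fr) F) :
    HasHK I f F := by
  intro ε hε
  obtain ⟨-, ⟨N, rfl⟩, hN, -⟩ :=
    hsup.exists_between (sub_lt_self F (by positivity : 0 < ε / 4))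
  obtain ⟨δN, hδN, hSN⟩ := hint N (ε / 4) (by positivity)
  choose γ hγ hSγ using fun s =>
    (hint (s + 1)).sub (hint s) (ε / 8 * (1 / 2) ^ s) (by positivity)
  have hc : 0 < ε / 4 / I.vol := div_pos (by positivity) I.vol_pos
  have hr (P : ι → ℝ) : ∃ r, N ≤ r ∧ f P ≤ fr r P + ε / 4 / I.vol := by
    obtain ⟨r, hr, hNr⟩ := (((hlim P).eventually (lt_mem_nhds (sub_lt_self _ hc))).and
      (eventually_ge_atTop N)).exists
    exact ⟨r, hNr, by linarith⟩
  choose r hrN hr using hr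
  obtain ⟨δ, hδ, hδγ⟩ := exists_isGauge_le hγ r
  refine ⟨fun x => min (δN x) (δ x), fun x hx => lt_min (hδN x hx) (hδ x hx),
    fun D hD => ?_⟩
  obtain ⟨M, htel⟩ := exists_riemannSum_sub_le_of_increments hmono hγ hSγ D hrN
    (hD.mono fun _ _ => min_le_right _ _) fun x s hs => hδγ x s hs.le
  have hle := riemannSum_mono (D := D) fun x => hmono x (hrN x)
  have hge := riemannSum_mono (D := D) fun x => (hmono x).ge_of_tendsto (hlim x) (r x)
  have hclose := riemannSum_le_add_mul_vol (D := D) hc.le hr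
  have hgeom : ∑ s ∈ Finset.Ico N M, ε / 8 * (1 / 2) ^ s ≤ ε / 8 * 2 := by
    rw [← Finset.mul_sum]; gcongr; exact sum_Ico_geometric_two_le N M
  have hSN := abs_lt.1 (hSN D (hD.mono fun _ _ => min_le_left _ _))
  rw [div_mul_cancel₀ _ I.vol_pos.ne'] at hclose
  rw [abs_lt]
  constructor <;> linarith [hsup.1 ⟨M, rfl⟩]
end
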